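/- Fix m ≥ 1. Every central maximal intersecting subfamily F of P([m]) is ∅-minimal; that is, for every a ∈ [m] and every A ⊆ [m]\{a}, Λ(F*)_{(∅,{a})} ≤ Λ(F*)_{(A, A∪{a})}. -/

import Mathlib

open Finset

variable {m : ℕ}

/-- A family of finsets is intersecting if any two members meet. -/
def IsIntersecting (F : Finset (Finset (Fin m))) : Prop :=
  ∀ A ∈ F, ∀ B ∈ F, (A ∩ B).Nonempty

/-- A maximal intersecting subfamily of the power set of `Fin m`. -/
def IsMaxIntersecting (F : Finset (Finset (Fin m))) : Prop :=
  IsIntersecting F ∧ ∀ G : Finset (Finset (Fin m)), IsIntersecting G → F ⊆ G → G ⊆ F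

/-- A family is subset-closed if it contains all subsets of its members. -/
def IsSubsetClosed (F : Finset (Finset (Fin m))) : Prop :=
  ∀ A ∈ F, ∀ B ⊆ A, B ∈ F

/-- The embedding of a family into `ℝ^{P([m])}`. -/
def famVec (F : Finset (Finset (Fin m))) : Finset (Fin m) → ℝ := fun A =>
  if A ∈ F ∧ Aᶜ ∉ F then 1 else if A ∉ F ∧ Aᶜ ∈ F then -1 else 0

/-- The standard basis vector `e_A` of `ℝ^{P([m])}`. -/
def stdBasis (A : Finset (Fin m)) : Finset (Fin m) → ℝ := fun B => if B = A then 1 else 0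

/-- The star of a family centered at `a`. -/
def starFam (a : Fin m) (F : Finset (Finset (Fin m))) : Finset (Finset (Fin m)) :=
  F.filter fun A => a ∈ A

/-- The setwise complement (dual) `F* = {Aᶜ : A ∈ F}`. -/
def dualFam (F : Finset (Finset (Fin m))) : Finset (Finset (Fin m)) :=
  F.image fun A => Aᶜ

/-- `Tpath σ C k = C △ {σ(1), …, σ(k)}` (0-indexed: the images of the first `k` indices). -/
def Tpath (σ : Equiv.Perm (Fin m)) (C : Finset (Fin m)) (k : ℕ) : Finset (Fin m) :=
  symmDiff C ((Finset.univ.filter fun i : Fin m => (i : ℕ) < k).image σ)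

/-- The path-sum `Λ(H)` as a vector in `ℝ^{P([m]) × P([m])}`: at coordinate `(X, Y)` it is the
number of triples `(σ, C, k)` whose `k`-th path step goes from `X` to `Y`, minus the number of
triples whose `k`-th step goes from `Y` to `X`. -/
def LamW (H : Finset (Finset (Fin m))) (X Y : Finset (Fin m)) : ℝ :=
  ∑ σ : Equiv.Perm (Fin m), ∑ C ∈ H, ∑ k ∈ Finset.Icc 1 m,
    ((if Tpath σ C (k - 1) = X ∧ Tpath σ C k = Y then (1 : ℝ) else 0)
      - (if Tpath σ C (k - 1) = Y ∧ Tpath σ C k = X then (1 : ℝ) else 0))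

/-- A maximal intersecting family `F` is `∅`-minimal if for every `a`, the coordinate
`Λ(F*)_{(∅,{a})}` is the minimum of `Λ(F*)_{(A, A ∪ {a})}` over all `A ⊆ [m] \ {a}`. -/
def EmptyMinimal (F : Finset (Finset (Fin m))) : Prop :=
  ∀ a : Fin m, ∀ A : Finset (Fin m), a ∉ A →
    LamW (dualFam F) ∅ {a} ≤ LamW (dualFam F) A (insert a A)

/-!
Write `w(s) = s! (m-1-s)!`. The path of `σ` from `C` steps from `A` to `A ∪ {a}` exactly when
its first `s = |C △ A|` flips enumerate `C △ A` and the next one is `a`, which happens for `w(s)`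
permutations. Pairing each `D ∌ a` with `D ∪ {a}` and using that `F*` is closed under subsets,
`Λ(F*)_{(A, A ∪ {a})}` becomes the sum of `w(|D △ A|)` over the sets `D ∈ F*` with `a ∉ D` and
`D ∪ {a} ∉ F*`. For such `D` both `Dᶜ` and `D ∪ {a}` lie in `F`, so centrality puts `|D|` in
the middle of `{0, …, m-1}`, where `w = (m-1)! / C(m-1, ·)` is smallest; for `A = ∅` every
`|D △ A|` is replaced by `|D|`.
-/

open Equiv
open scoped Nat

theorem mem_dualFam {F : Finset (Finset (Fin m))} {D : Finset (Fin m)} :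
    D ∈ dualFam F ↔ Dᶜ ∈ F := by
  simp [dualFam]

namespace IsMaxIntersecting

variable {F : Finset (Finset (Fin m))} {A B : Finset (Fin m)}

theorem mem_of_forall_inter_nonempty (hF : IsMaxIntersecting F) (hA : A.Nonempty)
    (h : ∀ B ∈ F, (A ∩ B).Nonempty) : A ∈ F := by
  refine hF.2 (insert A F) ?_ (subset_insert A F) (mem_insert_self A F)
  intro X hX Y hY
  rcases mem_insert.1 hX with rfl | hXF <;> rcases mem_insert.1 hY with rfl | hYF
  · rwa [inter_self]
  · exact h Y hYF
  · rw [inter_comm]; exact h X hXF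
  · exact hF.1 X hXF Y hYF

theorem mem_of_subset (hF : IsMaxIntersecting F) (hA : A ∈ F) (hAB : A ⊆ B) : B ∈ F := by
  have hA' : A.Nonempty := by simpa using hF.1 A hA A hA
  exact hF.mem_of_forall_inter_nonempty (hA'.mono hAB) fun C hC =>
    (hF.1 A hA C hC).mono (inter_subset_inter_right hAB)

theorem mem_or_compl_mem (hF : IsMaxIntersecting F) (hA : A.Nonempty) : A ∈ F ∨ Aᶜ ∈ F := by
  by_contra! h
  obtain ⟨B, hB, hAB⟩ : ∃ B ∈ F, ¬(A ∩ B).Nonempty := by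
    by_contra! h'
    exact h.1 (hF.mem_of_forall_inter_nonempty hA h')
  exact h.2 (hF.mem_of_subset hB fun x hx => mem_compl.2 fun hxA => hAB ⟨x, mem_inter.2 ⟨hxA, hx⟩⟩)

theorem isSubsetClosed_dualFam (hF : IsMaxIntersecting F) : IsSubsetClosed (dualFam F) :=
  fun _ hA _ hBA => mem_dualFam.2 (hF.mem_of_subset (mem_dualFam.1 hA) (compl_subset_compl.2 hBA))

end IsMaxIntersecting

def initialSegment (m k : ℕ) : Finset (Fin m) :=
  Finset.univ.filter fun i : Fin m => (i : ℕ) < k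

theorem card_initialSegment {k : ℕ} (hk : k ≤ m) : #(initialSegment m k) = k := by
  simp [initialSegment, Fin.card_filter_val_lt, hk]

theorem initialSegment_succ {k : ℕ} (hk : k < m) :
    initialSegment m (k + 1) = insert ⟨k, hk⟩ (initialSegment m k) := by
  ext i
  simp only [initialSegment, mem_filter, mem_univ, true_and, mem_insert, Fin.ext_iff]
  omega

theorem initialSegment_mono {k l : ℕ} (hkl : k ≤ l) : initialSegment m k ⊆ initialSegment m l :=
  fun i hi => by simp only [initialSegment, mem_filter, mem_univ, true_and] at hi ⊢; omega

theorem initialSegment_of_le {k : ℕ} (hk : m ≤ k) : initialSegment m k = univ :=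
  filter_true_of_mem fun i _ => lt_of_lt_of_le i.isLt hk

theorem Tpath_eq_iff {σ : Perm (Fin m)} {C X : Finset (Fin m)} {k : ℕ} :
    Tpath σ C k = X ↔ (initialSegment m k).image σ = symmDiff C X := by
  change symmDiff C ((initialSegment m k).image σ) = X ↔ _
  constructor
  · rintro rfl
    rw [symmDiff_symmDiff_cancel_left]
  · intro h
    rw [h, symmDiff_symmDiff_cancel_left]

/-- With `P = C △ X` and `Q = C △ Y`, these are the `σ` whose path `Tpath σ C` steps from `X`
to `Y`; the step can only be the `(#P + 1)`-st one. -/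
def stepPerms (P Q : Finset (Fin m)) : Finset (Perm (Fin m)) :=
  univ.filter fun σ =>
    (initialSegment m #P).image σ = P ∧ (initialSegment m (#P + 1)).image σ = Q

theorem sum_Icc_ite_image_initialSegment {P Q : Finset (Fin m)} (hPQ : P ≠ Q) (σ : Perm (Fin m)) :
    ∑ k ∈ Icc 1 m, (if (initialSegment m (k - 1)).image σ = P ∧
        (initialSegment m k).image σ = Q then (1 : ℝ) else 0) =
      if σ ∈ stepPerms P Q then 1 else 0 := by
  rw [sum_eq_single (#P + 1)]
  · simp [stepPerms]
  · intro k hk hne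
    rw [if_neg]
    rintro ⟨hP, -⟩
    have := congrArg card hP
    rw [mem_Icc] at hk
    rw [card_image_of_injective _ σ.injective, card_initialSegment (by omega)] at this
    omega
  · intro hk
    have hPm : m ≤ #P := by rw [mem_Icc] at hk; omega
    rw [if_neg]
    rintro ⟨hP, hQ⟩
    rw [Nat.add_sub_cancel, initialSegment_of_le hPm] at hP
    rw [initialSegment_of_le (by omega)] at hQ
    exact hPQ (hP.symm.trans hQ)

theorem lamW_eq_sum_card_stepPerms (H : Finset (Finset (Fin m))) {X Y : Finset (Fin m)}
    (hXY : X ≠ Y) :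
    LamW H X Y = ∑ C ∈ H, ((#(stepPerms (symmDiff C X) (symmDiff C Y)) : ℝ) -
      #(stepPerms (symmDiff C Y) (symmDiff C X))) := by
  unfold LamW
  rw [sum_comm]
  refine sum_congr rfl fun C _ => ?_
  have hne : symmDiff C X ≠ symmDiff C Y := fun h => hXY (symmDiff_right_injective C h)
  simp only [Tpath_eq_iff, sum_sub_distrib, sum_Icc_ite_image_initialSegment hne,
    sum_Icc_ite_image_initialSegment hne.symm, sum_boole, filter_mem_eq_inter, univ_inter]

theorem stepPerms_eq_empty {P Q : Finset (Fin m)} (h : ¬P ⊆ Q) : stepPerms P Q = ∅ := by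
  refine eq_empty_of_forall_notMem fun σ hσ => h ?_
  obtain ⟨hP, hQ⟩ := (mem_filter.1 hσ).2
  exact hP ▸ hQ ▸ image_subset_image (initialSegment_mono (Nat.le_succ _))

theorem mem_stepPerms_insert {P : Finset (Fin m)} {a : Fin m} {σ : Perm (Fin m)} {s : ℕ}
    (hP : #P = s) (hs : s < m) :
    σ ∈ stepPerms P (insert a P) ↔ (initialSegment m s).image σ = P ∧ σ ⟨s, hs⟩ = a := by
  subst hP
  simp only [stepPerms, mem_filter, mem_univ, true_and, initialSegment_succ hs, image_insert]
  refine and_congr_right fun hσ => ?_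
  have hnot : σ ⟨#P, hs⟩ ∉ (initialSegment m #P).image σ := by
    simp [σ.injective.eq_iff, initialSegment]
  rw [hσ] at hnot ⊢
  exact insert_inj hnot

theorem card_stepPerms_image (g : Perm (Fin m)) (P Q : Finset (Fin m)) :
    #(stepPerms (P.image g) (Q.image g)) = #(stepPerms P Q) := by
  refine (card_equiv (Equiv.mulLeft g) fun σ => ?_).symm
  simp only [stepPerms, mem_filter, mem_univ, true_and, coe_mulLeft, Perm.coe_mul,
    card_image_of_injective _ g.injective, ← image_image, (image_injective g.injective).eq_iff]

theorem exists_perm_image_eq_apply_eq {α : Type*} [Fintype α] [DecidableEq α] {S S' : Finset α}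
    {a a' : α} (ha : a ∉ S) (ha' : a' ∉ S') (h : #S = #S') :
    ∃ g : Perm α, S.image g = S' ∧ g a = a' := by
  set g₀ : Perm α := (equivOfCardEq h).extendSubtype
  have himage : S.image g₀ = S' :=
    eq_of_subset_of_card_le (image_subset_iff.2 fun x hx => extendSubtype_mem _ x hx)
      (by rw [card_image_of_injective _ g₀.injective, h])
  have hb : g₀ a ∉ S' := extendSubtype_not_mem _ a ha
  -- both `g₀ a` and `a'` lie outside `S'`, so the swap fixes `S'` pointwise
  refine ⟨g₀.trans (swap (g₀ a) a'), ?_, swap_apply_left _ _⟩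
  rw [coe_trans, ← image_image, himage, image_congr fun x hx => swap_apply_of_ne_of_ne
    (ne_of_mem_of_not_mem hx hb) (ne_of_mem_of_not_mem hx ha'), image_id']

theorem card_stepPerms_insert_congr {P P' : Finset (Fin m)} {a a' : Fin m} (ha : a ∉ P)
    (ha' : a' ∉ P') (h : #P = #P') :
    #(stepPerms P (insert a P)) = #(stepPerms P' (insert a' P')) := by
  obtain ⟨g, hg, hga⟩ := exists_perm_image_eq_apply_eq ha ha' h
  rw [← card_stepPerms_image g, image_insert, hg, hga]

theorem sum_card_stepPerms_insert {s : ℕ} (hs : s < m) :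
    ∑ x ∈ (univ : Finset (Fin m)).sigma fun a => (univ.erase a).powersetCard s,
      #(stepPerms x.2 (insert x.1 x.2)) = m ! := by
  set f : Perm (Fin m) → Σ _ : Fin m, Finset (Fin m) :=
    fun σ => ⟨σ ⟨s, hs⟩, (initialSegment m s).image σ⟩
  have hmaps : ∀ σ ∈ univ, f σ ∈ (univ : Finset (Fin m)).sigma fun a =>
      (univ.erase a).powersetCard s := by
    intro σ _
    simp only [f, mem_sigma, mem_univ, true_and, mem_powersetCard,
      card_image_of_injective _ σ.injective, card_initialSegment hs.le, and_true]
    intro x hx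
    obtain ⟨i, hi, rfl⟩ := mem_image.1 hx
    simp only [mem_erase, ne_eq, σ.injective.eq_iff, mem_univ, and_true]
    rintro rfl
    simp [initialSegment] at hi
  have hcount := card_eq_sum_card_fiberwise hmaps
  rw [Finset.card_univ, Fintype.card_perm, Fintype.card_fin] at hcount
  rw [hcount]
  refine sum_congr rfl fun ⟨a, P⟩ hx => congrArg card (ext fun σ => ?_)
  simp only [mem_sigma, mem_powersetCard] at hx
  rw [mem_stepPerms_insert hx.2.2 hs]
  simp [f, and_comm]

def stepCount (m s : ℕ) : ℕ := s ! * (m - 1 - s)!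

theorem card_stepPerms_insert {P : Finset (Fin m)} {a : Fin m} (ha : a ∉ P) :
    #(stepPerms P (insert a P)) = stepCount m #P := by
  have hm : 0 < m := a.pos
  have hP : #P < m := (card_lt_univ_of_notMem ha).trans_eq (Fintype.card_fin m)
  have hsum := sum_card_stepPerms_insert hP
  rw [sum_congr rfl fun x hx => by
      simp only [mem_sigma, mem_univ, true_and, mem_powersetCard, subset_erase] at hx
      exact card_stepPerms_insert_congr hx.1.2 ha hx.2,
    sum_const, card_sigma, sum_congr rfl fun b _ => by
      rw [card_powersetCard, card_erase_of_mem (mem_univ b), card_univ, Fintype.card_fin],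
    sum_const, card_univ, Fintype.card_fin, smul_eq_mul, smul_eq_mul] at hsum
  have hfac : m * (m - 1).choose #P * stepCount m #P = m ! := by
    rw [stepCount, mul_assoc, ← mul_assoc ((m - 1).choose _),
      Nat.choose_mul_factorial_mul_factorial (by omega), Nat.mul_factorial_pred hm.ne']
  exact Nat.eq_of_mul_eq_mul_left (mul_pos hm (Nat.choose_pos (by omega))) (hsum.trans hfac.symm)

theorem stepCount_le_of_middle {s t : ℕ} (hs₁ : m ≤ 2 * s + 2) (hs₂ : 2 * s ≤ m) (ht : t < m) :
    stepCount m s ≤ stepCount m t := by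
  have hchoose : (m - 1).choose t ≤ (m - 1).choose s := by
    obtain hs | hs : s = (m - 1) / 2 ∨ s = (m - 1) - (m - 1) / 2 := by omega
    · exact hs ▸ Nat.choose_le_middle t (m - 1)
    · rw [hs, Nat.choose_symm (Nat.div_le_self _ 2)]
      exact Nat.choose_le_middle t (m - 1)
  refine Nat.le_of_mul_le_mul_left ?_ (Nat.choose_pos (by omega : t ≤ m - 1))
  calc (m - 1).choose t * stepCount m s
      ≤ (m - 1).choose s * stepCount m s := Nat.mul_le_mul_right _ hchoose
    _ = (m - 1)! := by
      rw [stepCount, ← mul_assoc, Nat.choose_mul_factorial_mul_factorial (by omega)]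
    _ = (m - 1).choose t * stepCount m t := by
      rw [stepCount, ← mul_assoc, Nat.choose_mul_factorial_mul_factorial (by omega)]

theorem lamW_insert (H : Finset (Finset (Fin m))) {a : Fin m} {A : Finset (Fin m)} (ha : a ∉ A) :
    LamW H A (insert a A) = ∑ C ∈ H,
      if a ∈ C then -(stepCount m #(symmDiff C (insert a A)) : ℝ)
      else (stepCount m #(symmDiff C A) : ℝ) := by
  rw [lamW_eq_sum_card_stepPerms H (insert_ne_self.2 ha).symm]
  refine sum_congr rfl fun C _ => ?_
  split_ifs with hC
  · set P := symmDiff C (insert a A)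
    have haP : a ∉ P := by simp [P, mem_symmDiff, hC]
    have hCA : symmDiff C A = insert a P := by
      ext x; simp only [P, mem_symmDiff, mem_insert]; grind
    rw [hCA, stepPerms_eq_empty fun h => haP (h (mem_insert_self a P)),
      card_stepPerms_insert haP]
    simp
  · set P := symmDiff C A
    have haP : a ∉ P := by simp [P, mem_symmDiff, hC, ha]
    have hCA : symmDiff C (insert a A) = insert a P := by
      ext x; simp only [P, mem_symmDiff, mem_insert]; grind
    rw [hCA, stepPerms_eq_empty fun h => haP (h (mem_insert_self a P)),
      card_stepPerms_insert haP]
    simp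

def upBoundary (a : Fin m) (H : Finset (Finset (Fin m))) : Finset (Finset (Fin m)) :=
  H.filter fun D => a ∉ D ∧ insert a D ∉ H

theorem lamW_insert_eq_sum_upBoundary {H : Finset (Finset (Fin m))} (hH : IsSubsetClosed H)
    {a : Fin m} {A : Finset (Fin m)} (ha : a ∉ A) :
    LamW H A (insert a A) = ∑ D ∈ upBoundary a H, (stepCount m #(symmDiff D A) : ℝ) := by
  set w : Finset (Fin m) → ℝ := fun D => stepCount m #(symmDiff D A)
  have hcontaining : ∑ C ∈ H with a ∈ C, (stepCount m #(symmDiff C (insert a A)) : ℝ) =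
      ∑ D ∈ H with a ∉ D ∧ insert a D ∈ H, w D := by
    refine sum_nbij' (fun C => C.erase a) (insert a) ?_ ?_ ?_ ?_ ?_
    · intro C hC
      obtain ⟨hCH, haC⟩ := mem_filter.1 hC
      simpa [insert_erase haC, hCH] using hH C hCH _ (erase_subset a C)
    · intro D hD
      simpa using (mem_filter.1 hD).2.2
    · intro C hC
      exact insert_erase (mem_filter.1 hC).2
    · intro D hD
      exact erase_insert (mem_filter.1 hD).2.1
    · intro C hC
      have haC := (mem_filter.1 hC).2
      simp only [w]
      congr 3
      ext x; simp only [mem_symmDiff, mem_insert, mem_erase]; grind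
  have havoiding : ∑ C ∈ H with a ∉ C, w C =
      ∑ D ∈ H with a ∉ D ∧ insert a D ∈ H, w D + ∑ D ∈ upBoundary a H, w D := by
    rw [← sum_filter_add_sum_filter_not _ (fun D => insert a D ∈ H), filter_filter,
      filter_filter]
    rfl
  rw [lamW_insert H ha, ← sum_filter_add_sum_filter_not H (a ∈ ·),
    sum_congr rfl fun C hC => if_pos (mem_filter.1 hC).2,
    sum_congr rfl fun C hC => if_neg (mem_filter.1 hC).2, sum_neg_distrib, hcontaining, havoiding]
  ring

theorem card_of_mem_upBoundary_dualFam {F : Finset (Finset (Fin m))} (hF : IsMaxIntersecting F)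
    (hcentral : ∀ A ∈ F, m ≤ 2 * A.card) {a : Fin m} {D : Finset (Fin m)}
    (hD : D ∈ upBoundary a (dualFam F)) : m ≤ 2 * #D + 2 ∧ 2 * #D ≤ m := by
  obtain ⟨hDF, haD, hinsert⟩ := mem_filter.1 hD
  rw [mem_dualFam] at hDF hinsert
  have hinsertF : insert a D ∈ F :=
    (hF.mem_or_compl_mem (insert_nonempty a D)).resolve_right hinsert
  have h₁ := hcentral _ hinsertF
  have h₂ := hcentral _ hDF
  rw [card_insert_of_notMem haD] at h₁
  rw [card_compl, Fintype.card_fin] at h₂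
  have hD_le : #D ≤ m := (card_le_univ D).trans_eq (Fintype.card_fin m)
  omega

theorem central_emptyMinimal_general (m : ℕ) (F : Finset (Finset (Fin m)))
    (hF : IsMaxIntersecting F) (hcentral : ∀ A ∈ F, m ≤ 2 * A.card) :
    EmptyMinimal F := by
  intro a A ha
  have hH := hF.isSubsetClosed_dualFam
  rw [← insert_empty, lamW_insert_eq_sum_upBoundary hH (notMem_empty a),
    lamW_insert_eq_sum_upBoundary hH ha]
  refine sum_le_sum fun D hD => ?_
  obtain ⟨h₁, h₂⟩ := card_of_mem_upBoundary_dualFam hF hcentral hD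
  have haDA : a ∉ symmDiff D A := by
    simp [mem_symmDiff, (mem_filter.1 hD).2.1, ha]
  rw [← bot_eq_empty, symmDiff_bot]
  exact_mod_cast stepCount_le_of_middle h₁ h₂
    ((card_lt_univ_of_notMem haDA).trans_eq (Fintype.card_fin m))

/-- Every central maximal intersecting family is `∅`-minimal. -/
theorem central_emptyMinimal (m : ℕ) (hm : 1 ≤ m) (F : Finset (Finset (Fin m)))
    (hF : IsMaxIntersecting F) (hcentral : ∀ A ∈ F, m ≤ 2 * A.card) :
    EmptyMinimal F :=
  central_emptyMinimal_general m F hF hcentral
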